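/- There is an absolute constant Ξ ∈ (0, π) such that for all real θ with |θ| < Ξ, all n_0 ∈ ℕ, and all integers j ≥ n_0, the point Q_θ(ζ_j) lies in the wedge { z ∈ 𝔻 : |arg z| ≤ (1/2)·e^{−n_0} }, where Q_θ = T_{ζ_{n_0}}^{−1} ∘ (multiplication by e^{iθ}) ∘ T_{ζ_{n_0}} is the hyperbolic rotation of the disk around ζ_{n_0} by angle θ. -/

import Mathlib

noncomputable section

/-- The hyperbolic disk automorphism `T_y(z) = (z − y)/(1 − z ȳ)` taking `y` to `0`. -/
def Tmap (y z : ℂ) : ℂ := (z - y) / (1 - z * (starRingEnd ℂ) y)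

/-- The point `ζ_i = tanh(i/2)` on the positive real axis. -/
def zeta (i : ℕ) : ℂ := (Real.tanh (i / 2) : ℝ)

/-- The hyperbolic rotation of the disk around `ζ_{n₀}` by angle `θ`:
`Q_θ = T_{ζ_{n₀}}⁻¹ ∘ (z ↦ e^{iθ} z) ∘ T_{ζ_{n₀}}` (using `T_y⁻¹ = T_{−y}`). -/
def Qrot (θ : ℝ) (n₀ : ℕ) (z : ℂ) : ℂ :=
  Tmap (-(zeta n₀)) (Complex.exp ((θ : ℂ) * Complex.I) * Tmap (zeta n₀) z)

/-!
Write `a = ζ_{n₀}` and `s = T_a(ζ_j)`; both are real and `s ≥ 0` because `tanh` is increasing.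
Then `Q_θ(ζ_j) = T_{-a}(e^{iθ} s) = (e^{iθ} s + a) / (1 + e^{iθ} s a)`, which lies in the disk
because `|1 - z ȳ|² - |z - y|² = (1 - |z|²)(1 - |y|²)`. After multiplying by the conjugate of
the denominator, the real part is `s cos θ (1 + a²) + a (1 + s²) ≥ s cos θ` and the imaginary
part is `s sin θ (1 - a²)`, so `|arg Q_θ(ζ_j)| ≤ |tan θ| (1 - a²) ≤ 4 |tan θ| e^{-n₀}`.
Hence `Ξ = arctan (1/8)` works.
-/

open Complex ComplexConjugate

lemma Real.abs_le_abs_tan {x : ℝ} (hx : |x| < Real.pi / 2) : |x| ≤ |Real.tan x| := by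
  rcases le_or_gt 0 x with h | h
  · have := Real.le_tan h (by rwa [abs_of_nonneg h] at hx)
    rw [abs_of_nonneg h]
    exact this.trans (le_abs_self _)
  · have := Real.le_tan (neg_nonneg.2 h.le) (by rwa [abs_of_neg h] at hx)
    rw [Real.tan_neg] at this
    rw [abs_of_neg h]
    exact this.trans (neg_le_abs _)

lemma Real.abs_tan_lt_of_abs_lt_arctan {θ r : ℝ} (h : |θ| < Real.arctan r) :
    |Real.tan θ| < r := by
  obtain ⟨hlo, hhi⟩ := abs_lt.1 h
  have hθ₁ : -(Real.pi / 2) < θ := by linarith [Real.arctan_lt_pi_div_two r]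
  have hθ₂ : θ < Real.pi / 2 := hhi.trans (Real.arctan_lt_pi_div_two r)
  refine abs_lt.2 ⟨?_, ?_⟩ <;> rw [← Real.arctan_lt_arctan_iff]
  · rwa [Real.arctan_neg, Real.arctan_tan hθ₁ hθ₂]
  · rwa [Real.arctan_tan hθ₁ hθ₂]

lemma Real.tanh_le_tanh {x y : ℝ} (h : x ≤ y) : Real.tanh x ≤ Real.tanh y := by
  by_contra! hlt
  have := Real.artanh_lt_artanh (Real.neg_one_lt_tanh y) (Real.tanh_lt_one x) hlt
  rw [Real.artanh_tanh, Real.artanh_tanh] at this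
  linarith

lemma Real.one_sub_tanh_sq_le (x : ℝ) : 1 - Real.tanh x ^ 2 ≤ 4 * Real.exp (-2 * x) := by
  have hprod : Real.exp x * Real.exp (-x) = 1 := by
    rw [← Real.exp_add, add_neg_cancel, Real.exp_zero]
  have hp := Real.exp_pos x
  have hq := Real.exp_pos (-x)
  rw [Real.tanh_eq, show -2 * x = -x + -x by ring, Real.exp_add, div_pow,
    one_sub_div (by positivity), div_le_iff₀ (by positivity)]
  nlinarith [mul_pos hq hq]

lemma Complex.abs_arg_le_of_abs_im_le {z : ℂ} {K : ℝ} (hK : 0 ≤ K) (hre : 0 ≤ z.re)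
    (him : |z.im| ≤ K * z.re) : |arg z| ≤ K := by
  rcases hre.eq_or_lt with hre0 | hre0
  · have : z = 0 := Complex.ext (by simp [← hre0]) (by simpa [← hre0] using him)
    simpa [this] using hK
  · calc |arg z| ≤ |Real.tan (arg z)| :=
          Real.abs_le_abs_tan (abs_arg_lt_pi_div_two_iff.2 (Or.inl hre0))
      _ = |z.im| / z.re := by rw [tan_arg, abs_div, abs_of_pos hre0]
      _ ≤ K := (div_le_iff₀ hre0).2 him

lemma normSq_one_sub_mul_conj_sub_normSq_sub (y z : ℂ) :
    normSq (1 - z * conj y) - normSq (z - y) = (1 - normSq z) * (1 - normSq y) := by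
  simp only [normSq_apply, sub_re, sub_im, mul_re, mul_im, conj_re, conj_im, one_re, one_im]
  ring

lemma norm_Tmap_lt_one {y z : ℂ} (hy : ‖y‖ < 1) (hz : ‖z‖ < 1) : ‖Tmap y z‖ < 1 := by
  have hy' : normSq y < 1 := by rw [normSq_eq_norm_sq]; nlinarith [norm_nonneg y]
  have hz' : normSq z < 1 := by rw [normSq_eq_norm_sq]; nlinarith [norm_nonneg z]
  have key := normSq_one_sub_mul_conj_sub_normSq_sub y z
  have hlt : normSq (z - y) < normSq (1 - z * conj y) := by
    nlinarith [mul_pos (sub_pos.2 hz') (sub_pos.2 hy')]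
  have hD : 1 - z * conj y ≠ 0 := fun h => by
    rw [h, map_zero] at hlt
    exact (normSq_nonneg _).not_gt hlt
  rw [Tmap, norm_div, div_lt_one (norm_pos_iff.2 hD),
    ← sq_lt_sq₀ (norm_nonneg _) (norm_nonneg _), ← normSq_eq_norm_sq, ← normSq_eq_norm_sq]
  exact hlt

lemma Tmap_ofReal (a t : ℝ) : Tmap a t = ((t - a) / (1 - t * a) : ℝ) := by
  simp only [Tmap, conj_ofReal]
  push_cast
  ring

lemma abs_arg_Tmap_neg_exp_mul_le {a s θ : ℝ} (ha₀ : 0 ≤ a) (ha₁ : a ≤ 1) (hs : 0 ≤ s)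
    (hθ : 0 < Real.cos θ) :
    |arg (Tmap (-a) (exp (θ * I) * s))| ≤ |Real.tan θ| * (1 - a ^ 2) := by
  have hform :
      Tmap (-a) (exp (θ * I) * s) = (exp (θ * I) * s + a) / (1 + exp (θ * I) * s * a) := by
    simp only [Tmap, map_neg, conj_ofReal]; ring
  set c := Real.cos θ
  have hsin : |Real.sin θ| = |Real.tan θ| * c := by
    rw [Real.tan_eq_sin_div_cos, abs_div, abs_of_pos hθ, div_mul_cancel₀ _ hθ.ne']
  have hpyth : Real.sin θ ^ 2 + c ^ 2 = 1 := Real.sin_sq_add_cos_sq θ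
  have h1a : 0 ≤ 1 - a ^ 2 := by nlinarith
  have hK : 0 ≤ |Real.tan θ| * (1 - a ^ 2) := by positivity
  have hD : 0 ≤ normSq (1 + exp (θ * I) * s * a) := normSq_nonneg _
  have hre : ((exp (θ * I) * s + a) / (1 + exp (θ * I) * s * a)).re
      = (c * s * (1 + a ^ 2) + a * (1 + s ^ 2)) / normSq (1 + exp (θ * I) * s * a) := by
    rw [div_re, ← add_div]
    congr 1
    simp only [add_re, add_im, mul_re, mul_im, one_re, one_im, ofReal_re, ofReal_im,
      exp_ofReal_mul_I_re, exp_ofReal_mul_I_im, mul_zero, sub_zero, zero_add, add_zero]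
    linear_combination (s ^ 2 * a) * hpyth
  have him : ((exp (θ * I) * s + a) / (1 + exp (θ * I) * s * a)).im
      = Real.sin θ * s * (1 - a ^ 2) / normSq (1 + exp (θ * I) * s * a) := by
    rw [div_im, ← sub_div]
    congr 1
    simp only [add_re, add_im, mul_re, mul_im, one_re, one_im, ofReal_re, ofReal_im,
      exp_ofReal_mul_I_re, exp_ofReal_mul_I_im, mul_zero, sub_zero, zero_add, add_zero]
    ring
  rw [hform]
  apply Complex.abs_arg_le_of_abs_im_le hK
  · rw [hre]; positivity
  · rw [hre, him, abs_div, abs_of_nonneg hD, mul_div_assoc']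
    gcongr
    calc |Real.sin θ * s * (1 - a ^ 2)| = |Real.tan θ| * (1 - a ^ 2) * (c * s) := by
          rw [abs_mul, abs_mul, hsin, abs_of_nonneg hs, abs_of_nonneg h1a]; ring
      _ ≤ |Real.tan θ| * (1 - a ^ 2) * (c * s * (1 + a ^ 2) + a * (1 + s ^ 2)) := by
          gcongr
          nlinarith [mul_nonneg (mul_nonneg hθ.le hs) (sq_nonneg a),
            mul_nonneg ha₀ (sq_nonneg s)]

lemma norm_zeta_lt_one (i : ℕ) : ‖zeta i‖ < 1 := by
  rw [zeta, norm_real, Real.norm_eq_abs, abs_lt]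
  exact ⟨Real.neg_one_lt_tanh _, Real.tanh_lt_one _⟩

/-- There is an absolute constant `Ξ ∈ (0, π)` so that for all `|θ| < Ξ`, all `n₀ ∈ ℕ`
and all `j ≥ n₀`, the point `Q_θ(ζ_j)` lies in the wedge
`{z ∈ 𝔻 : |arg z| ≤ (1/2) e^{−n₀}}`. -/
theorem stmt_10 :
    ∃ Ξ : ℝ, 0 < Ξ ∧ Ξ < Real.pi ∧
      ∀ θ : ℝ, |θ| < Ξ → ∀ n₀ j : ℕ, n₀ ≤ j →
        Qrot θ n₀ (zeta j) ∈ Metric.ball (0 : ℂ) 1 ∧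
        |Complex.arg (Qrot θ n₀ (zeta j))| ≤ 1 / 2 * Real.exp (-(n₀ : ℝ)) := by
  refine ⟨Real.arctan (1 / 8), Real.arctan_pos.2 (by norm_num),
    (Real.arctan_lt_pi_div_two _).trans (by linarith [Real.pi_pos]), ?_⟩
  intro θ hθ n₀ j hj
  refine ⟨?_, ?_⟩
  · rw [mem_ball_zero_iff]
    refine norm_Tmap_lt_one (by rw [norm_neg]; exact norm_zeta_lt_one n₀) ?_
    rw [norm_mul, norm_exp_ofReal_mul_I, one_mul]
    exact norm_Tmap_lt_one (norm_zeta_lt_one n₀) (norm_zeta_lt_one j)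
  · set a := Real.tanh (n₀ / 2)
    set t := Real.tanh (j / 2)
    have ha₀ : 0 ≤ a := Real.tanh_zero ▸ Real.tanh_le_tanh (by positivity)
    have hat : a ≤ t := Real.tanh_le_tanh (by gcongr)
    have hs : 0 ≤ (t - a) / (1 - t * a) := div_nonneg (sub_nonneg.2 hat)
      (by nlinarith [Real.tanh_lt_one (n₀ / 2), Real.tanh_lt_one (j / 2)])
    have hcos : 0 < Real.cos θ :=
      Real.cos_pos_of_mem_Ioo (abs_lt.1 (hθ.trans (Real.arctan_lt_pi_div_two _)))
    calc |arg (Qrot θ n₀ (zeta j))| ≤ |Real.tan θ| * (1 - a ^ 2) := by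
          rw [Qrot, zeta, zeta, Tmap_ofReal]
          exact abs_arg_Tmap_neg_exp_mul_le ha₀ (Real.tanh_lt_one _).le hs hcos
      _ ≤ 1 / 8 * (4 * Real.exp (-2 * (n₀ / 2))) := by
          refine mul_le_mul (Real.abs_tan_lt_of_abs_lt_arctan hθ).le (Real.one_sub_tanh_sq_le _)
            ?_ (by norm_num)
          nlinarith [Real.tanh_lt_one (n₀ / 2)]
      _ = 1 / 2 * Real.exp (-(n₀ : ℝ)) := by ring_nf

end
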